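/- For every u ∈ U ∪ V ∪ V̄ and every unary polynomial F of B(T): if F(0) ≠ F(u) (F is nonconstant on {0,u}), then F(0) = 0. -/
import Mathlib


namespace Paper

/-- Direction of a Turing-machine head move. -/
inductive Dir : Type
  | L | R
deriving DecidableEq

/-- A Turing machine with states μ₀, μ₁, …, μ_k (μ₀ the halting state): for each state
μ_i with 1 ≤ i ≤ k and each tape symbol r, exactly one instruction μ_i r s D μ_m,
recorded as `instr i r = (s, D, m)`.  (The value of `instr` at `i = 0` is irrelevant:
no instruction begins with μ₀.) -/
structure TM (k : ℕ) : Type where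
  instr : Fin (k + 1) → Bool → Bool × Dir × Fin (k + 1)

/-- The universe of the algebra B(T):
`zero` = 0, `P j` = P_j, `one`,`two`,`H` the sequential elements U, and the machine
elements `C b i r s` = C_{ir}^s, `D b i r s` = D_{ir}^s, `M b i r` = M_i^r, where
`b = true` marks the barred copy V̄. -/
inductive BT (k : ℕ) : Type
  | zero : BT k
  | P : Fin 3 → BT k
  | one : BT k
  | two : BT k
  | H : BT k
  | C : Bool → Fin (k + 1) → Bool → Bool → BT k
  | D : Bool → Fin (k + 1) → Bool → Bool → BT k
  | M : Bool → Fin (k + 1) → Bool → BT k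
deriving DecidableEq

namespace BT

variable {k : ℕ}

/-- The partial order of B(T): x ≤ y iff x = 0, or x = y, or (x = P₂ and y ∈ {P₀,P₁}). -/
def le (x y : BT k) : Prop :=
  x = zero ∨ x = y ∨ (x = P 2 ∧ (y = P 0 ∨ y = P 1))

/-- x ∧ y: the greatest lower bound for `le`. -/
def meet (x y : BT k) : BT k :=
  if x = y then x
  else if x = P 2 ∧ (y = P 0 ∨ y = P 1) then P 2
  else if y = P 2 ∧ (x = P 0 ∨ x = P 1) then P 2
  else if (x = P 0 ∨ x = P 1) ∧ (y = P 0 ∨ y = P 1) then P 2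
  else zero

/-- membership in P = {P₀,P₁,P₂} -/
def isP : BT k → Bool
  | P _ => true
  | _ => false

/-- membership in U = {1,2,H} -/
def isU : BT k → Bool
  | one => true
  | two => true
  | H => true
  | _ => false

/-- membership in V ∪ V̄ -/
def isVV : BT k → Bool
  | C _ _ _ _ => true
  | D _ _ _ _ => true
  | M _ _ _ => true
  | _ => false

/-- membership in U ∪ V ∪ V̄ -/
def isUVV (x : BT k) : Bool := isU x || isVV x

/-- membership in V₀ = {C_{0r}^s, D_{0r}^s, M₀^r} (unbarred, state μ₀) -/
def isV0 : BT k → Bool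
  | C false i _ _ => i == 0
  | D false i _ _ => i == 0
  | M false i _ => i == 0
  | _ => false

/-- membership in V₁₀⁰ = {C₁₀⁰, M₁⁰, D₁₀⁰} -/
def isV10 (x : BT k) : Bool :=
  x == C false 1 false false || x == M false 1 false || x == D false 1 false false

/-- the bar involution on V ∪ V̄ (identity elsewhere) -/
def barOp : BT k → BT k
  | C b i r s => C (!b) i r s
  | D b i r s => D (!b) i r s
  | M b i r => M (!b) i r
  | x => x

/-- s₀ = C₁₀⁰, s₁ = M₁⁰, s₂ = D₁₀⁰ -/
def sel : Fin 3 → BT k := ![C false 1 false false, M false 1 false, D false 1 false false]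

/-- x ∧ⁱ y = x if x = y ∈ (P ∪ V₁₀⁰) \ {s_i}, else 0. -/
def meetI (i : Fin 3) (x y : BT k) : BT k :=
  if x = y ∧ (isP x ∨ isV10 x) ∧ x ≠ sel i then x else zero

/-- T₀(x) = P₂ if x ∈ {P₀,P₂}; P₀ if x = P₁; x if x ∈ V₀; else 0. -/
def T0 : BT k → BT k
  | P j => if j = 1 then P 0 else P 2
  | C false i r s => if i = 0 then C false i r s else zero
  | D false i r s => if i = 0 then D false i r s else zero
  | M false i r => if i = 0 then M false i r else zero
  | _ => zero

/-- T₁(x,y). -/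
def T1 (x y : BT k) : BT k :=
  if (x = P 0 ∧ y = P 0) ∨ (x = P 0 ∧ y = P 1) ∨ (x = P 1 ∧ y = P 0) ∨
     (x = P 0 ∧ y = P 2) ∨ (x = P 2 ∧ y = P 0) then P 1
  else if (x = P 1 ∨ x = P 2) ∧ (y = P 1 ∨ y = P 2) then P 2
  else if x = y ∧ isV10 x then x
  else zero

/-- J′(x,y,z) = x ∧ z if x = y or {x,y} ⊆ P; x if x = ȳ ∈ V ∪ V̄; else 0. -/
def J' (x y z : BT k) : BT k :=
  if x = y ∨ (isP x ∧ isP y) then meet x z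
  else if isVV y ∧ x = barOp y then x
  else zero

/-- the ternary discriminator: t(x,y,z) = z if x = y, else x. -/
def disc (x y z : BT k) : BT k := if x = y then z else x

/-- S₁(u,x,y,z). -/
def S1 (u x y z : BT k) : BT k :=
  if (u = one ∨ u = two) ∧ x = y ∧ y = z ∧ isUVV x then x
  else if isP x ∧ isP y ∧ isP z then disc x y z
  else zero

/-- S₂(u,v,x,y,z). -/
def S2 (u v x y z : BT k) : BT k :=
  if isVV v ∧ u = barOp v ∧ x = y ∧ y = z ∧ isVV x then x
  else if isP x ∧ isP y ∧ isP z then disc x y z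
  else zero

/-- L_{irt} for the instruction μ_i r s L μ_m (the barred clause is handled by carrying
the bar `b` of the argument through). -/
def Lop (i : Fin (k + 1)) (r s : Bool) (m : Fin (k + 1)) (t : Bool) :
    BT k → BT k → BT k → BT k := fun x y u =>
  match u with
  | P j => if x = one ∧ y = one then P j else zero
  | C b i' r' s' =>
      if x = one ∧ y = one ∧ i' = i ∧ r' = r then C b m t s'
      else if x = H ∧ y = one ∧ i' = i ∧ r' = r ∧ s' = t then M b m t
      else zero
  | M b i' r' => if x = two ∧ y = H ∧ i' = i ∧ r' = r then D b m t s else zero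
  | D b i' r' s' => if x = two ∧ y = two ∧ i' = i ∧ r' = r then D b m t s' else zero
  | _ => zero

/-- R_{irt} for the instruction μ_i r s R μ_m. -/
def Rop (i : Fin (k + 1)) (r s : Bool) (m : Fin (k + 1)) (t : Bool) :
    BT k → BT k → BT k → BT k := fun x y u =>
  match u with
  | P j => if x = one ∧ y = one then P j else zero
  | C b i' r' s' => if x = one ∧ y = one ∧ i' = i ∧ r' = r then C b m t s' else zero
  | M b i' r' => if x = H ∧ y = one ∧ i' = i ∧ r' = r then C b m t s else zero
  | D b i' r' s' =>
      if x = two ∧ y = H ∧ i' = i ∧ r' = r ∧ s' = t then M b m t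
      else if x = two ∧ y = two ∧ i' = i ∧ r' = r then D b m t s'
      else zero
  | _ => zero

end BT

/-- The forward machine operation determined by the unique instruction of T beginning
with μ_i r (for 1 ≤ i ≤ k) and the symbol t. -/
def fwd {k : ℕ} (T : TM k) (i : Fin (k + 1)) (r t : Bool) :
    BT k → BT k → BT k → BT k :=
  match T.instr i r with
  | (s, Dir.L, m) => BT.Lop i r s m t
  | (s, Dir.R, m) => BT.Rop i r s m t

/-- the reverse of a machine operation: F°(x,y,u) = v when F(x,y,v) = u ≠ 0, else 0. -/
noncomputable def revOp {k : ℕ} (F : BT k → BT k → BT k → BT k) (x y u : BT k) : BT k :=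
  haveI := Classical.propDecidable (u ≠ BT.zero ∧ ∃ v, F x y v = u)
  if h : u ≠ BT.zero ∧ ∃ v, F x y v = u then h.2.choose else BT.zero

/-- The machine operations ℳ: `b = false` gives the forward operation, `b = true` the
reverse operation. -/
noncomputable def mop {k : ℕ} (T : TM k) (i : Fin (k + 1)) (r t : Bool) (b : Bool) :
    BT k → BT k → BT k → BT k :=
  match b with
  | false => fwd T i r t
  | true => revOp (fwd T i r t)

/-- The relation ≺ on U: 2≺2, 2≺H, H≺1, 1≺1. -/
def prec {k : ℕ} : BT k → BT k → Bool
  | BT.two, BT.two => true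
  | BT.two, BT.H => true
  | BT.H, BT.one => true
  | BT.one, BT.one => true
  | _, _ => false

/-- U_i¹ built from the machine operation F. -/
def U1op {k : ℕ} (F : BT k → BT k → BT k → BT k) (x y z u : BT k) : BT k :=
  if prec x y ∧ prec x z ∧ y ≠ z ∧ BT.isVV (F x y u) then BT.barOp (F x y u)
  else if prec x y ∧ y = z then F x y u
  else BT.zero

/-- U_i² built from the machine operation F. -/
def U2op {k : ℕ} (F : BT k → BT k → BT k → BT k) (x y z u : BT k) : BT k :=
  if prec x z ∧ prec y z ∧ x ≠ y ∧ BT.isVV (F y z u) then BT.barOp (F y z u)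
  else if x = y ∧ prec y z then F y z u
  else BT.zero

/-- The n-ary polynomials of the algebra B(T): functions obtained by composing the basic
operations (the constant 0, T₀, T₁, ∧, ∧⁰, ∧¹, ∧², J′, S₁, S₂, the forward and reverse
machine operations, and the U_i¹, U_i²), coordinate projections and constants. -/
inductive PolyB {k : ℕ} (T : TM k) : {n : ℕ} → ((Fin n → BT k) → BT k) → Prop where
  | proj {n : ℕ} (i : Fin n) : PolyB T fun v => v i
  | const {n : ℕ} (c : BT k) : PolyB T fun _ : Fin n → BT k => c
  | t0 {n : ℕ} {p : (Fin n → BT k) → BT k} :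
      PolyB T p → PolyB T fun v => BT.T0 (p v)
  | t1 {n : ℕ} {p q : (Fin n → BT k) → BT k} :
      PolyB T p → PolyB T q → PolyB T fun v => BT.T1 (p v) (q v)
  | meet {n : ℕ} {p q : (Fin n → BT k) → BT k} :
      PolyB T p → PolyB T q → PolyB T fun v => BT.meet (p v) (q v)
  | meetI (j : Fin 3) {n : ℕ} {p q : (Fin n → BT k) → BT k} :
      PolyB T p → PolyB T q → PolyB T fun v => BT.meetI j (p v) (q v)
  | jop {n : ℕ} {p q r : (Fin n → BT k) → BT k} :
      PolyB T p → PolyB T q → PolyB T r → PolyB T fun v => BT.J' (p v) (q v) (r v)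
  | s1 {n : ℕ} {p q r s : (Fin n → BT k) → BT k} :
      PolyB T p → PolyB T q → PolyB T r → PolyB T s →
      PolyB T fun v => BT.S1 (p v) (q v) (r v) (s v)
  | s2 {n : ℕ} {p q r s w : (Fin n → BT k) → BT k} :
      PolyB T p → PolyB T q → PolyB T r → PolyB T s → PolyB T w →
      PolyB T fun v => BT.S2 (p v) (q v) (r v) (s v) (w v)
  | mach (i : Fin (k + 1)) (hi : i ≠ 0) (r t b : Bool) {n : ℕ}
      {p q u : (Fin n → BT k) → BT k} :
      PolyB T p → PolyB T q → PolyB T u →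
      PolyB T fun v => mop T i r t b (p v) (q v) (u v)
  | u1 (i : Fin (k + 1)) (hi : i ≠ 0) (r t b : Bool) {n : ℕ}
      {p q r' s : (Fin n → BT k) → BT k} :
      PolyB T p → PolyB T q → PolyB T r' → PolyB T s →
      PolyB T fun v => U1op (mop T i r t b) (p v) (q v) (r' v) (s v)
  | u2 (i : Fin (k + 1)) (hi : i ≠ 0) (r t b : Bool) {n : ℕ}
      {p q r' s : (Fin n → BT k) → BT k} :
      PolyB T p → PolyB T q → PolyB T r' → PolyB T s →
      PolyB T fun v => U2op (mop T i r t b) (p v) (q v) (r' v) (s v)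

/-- unary polynomials of B(T) -/
def UPolyB {k : ℕ} (T : TM k) (F : BT k → BT k) : Prop :=
  PolyB T (n := 1) fun v => F (v 0)

/-- binary polynomials of B(T) -/
def BPolyB {k : ℕ} (T : TM k) (F : BT k → BT k → BT k) : Prop :=
  PolyB T (n := 2) fun v => F (v 0) (v 1)



section Aux
variable {k : ℕ}
open BT

lemma T1_zero_left (y : BT k) : BT.T1 BT.zero y = BT.zero := by
  unfold BT.T1
  split_ifs <;> first | rfl | simp_all [BT.isV10]

lemma T1_zero_right (x : BT k) : BT.T1 x BT.zero = BT.zero := by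
  unfold BT.T1
  split_ifs <;> first | rfl | simp_all [BT.isV10]

lemma meet_zero_left (y : BT k) : BT.meet BT.zero y = BT.zero := by
  unfold BT.meet
  split_ifs <;> first | rfl | simp_all

lemma meet_zero_right (x : BT k) : BT.meet x BT.zero = BT.zero := by
  unfold BT.meet
  split_ifs <;> first | rfl | simp_all

lemma meetI_zero_left (j : Fin 3) (y : BT k) : BT.meetI j BT.zero y = BT.zero := by
  unfold BT.meetI
  split_ifs <;> first | rfl | simp_all [BT.isP, BT.isV10]

lemma meetI_zero_right (j : Fin 3) (x : BT k) : BT.meetI j x BT.zero = BT.zero := by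
  unfold BT.meetI
  split_ifs <;> first | rfl | simp_all [BT.isP, BT.isV10]

lemma barOp_ne_zero {y : BT k} (h : BT.isVV y) : BT.barOp y ≠ BT.zero := by
  cases y <;> simp [BT.isVV, BT.barOp] at h ⊢

lemma J'_zero₁ (y z : BT k) : BT.J' BT.zero y z = BT.zero := by
  unfold BT.J'
  split_ifs with h1 h2
  · exact meet_zero_left z
  · rfl
  · rfl

lemma J'_zero₂ (x z : BT k) : BT.J' x BT.zero z = BT.zero := by
  unfold BT.J'
  split_ifs with h1 h2
  · rcases h1 with h|⟨_, h⟩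
    · subst h; exact meet_zero_left z
    · simp [BT.isP] at h
  · simp [BT.isVV] at h2
  · rfl

lemma J'_zero₃_or (x y : BT k) :
    BT.J' x y BT.zero = BT.zero ∨ ∀ z, BT.J' x y z = BT.J' x y BT.zero := by
  unfold BT.J'
  by_cases h1 : x = y ∨ (BT.isP x ∧ BT.isP y)
  · left; rw [if_pos h1]; exact meet_zero_right x
  · right; intro z; rw [if_neg h1, if_neg h1]

lemma isUVV_not_P {x : BT k} (j : Fin 3) (h : x = BT.P j) : BT.isUVV x = false := by
  subst h; rfl

lemma S1_zero₂ (u y z : BT k) : BT.S1 u BT.zero y z = BT.zero := by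
  unfold BT.S1
  split_ifs <;> first | rfl | simp_all [BT.isP, BT.isUVV, BT.isU, BT.isVV]

lemma S1_zero₃ (u x z : BT k) : BT.S1 u x BT.zero z = BT.zero := by
  unfold BT.S1
  split_ifs <;> first | rfl | simp_all [BT.isP, BT.isUVV, BT.isU, BT.isVV]

lemma S1_zero₄ (u x y : BT k) : BT.S1 u x y BT.zero = BT.zero := by
  unfold BT.S1
  split_ifs <;> first | rfl | simp_all [BT.isP, BT.isUVV, BT.isU, BT.isVV]

lemma S1_u_or (x y z : BT k) :
    BT.S1 BT.zero x y z = BT.zero ∨ ∀ u, BT.S1 u x y z = BT.S1 BT.zero x y z := by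
  unfold BT.S1
  have h0 : ¬ (((BT.zero : BT k) = BT.one ∨ (BT.zero : BT k) = BT.two) ∧ x = y ∧ y = z ∧ BT.isUVV x) := by
    rintro ⟨h|h, _⟩ <;> simp_all
  rw [if_neg h0]
  by_cases hP : BT.isP x ∧ BT.isP y ∧ BT.isP z
  · right; intro u
    have : ¬ ((u = BT.one ∨ u = BT.two) ∧ x = y ∧ y = z ∧ BT.isUVV x) := by
      rintro ⟨_, _, _, hx⟩
      cases x <;> simp_all [BT.isP, BT.isUVV, BT.isU, BT.isVV]
    rw [if_neg this]
  · left; rw [if_neg hP]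

lemma S2_zero₃ (u v y z : BT k) : BT.S2 u v BT.zero y z = BT.zero := by
  unfold BT.S2
  split_ifs <;> first | rfl | simp_all [BT.isP, BT.isVV]

lemma S2_zero₄ (u v x z : BT k) : BT.S2 u v x BT.zero z = BT.zero := by
  unfold BT.S2
  split_ifs <;> first | rfl | simp_all [BT.isP, BT.isVV]

lemma S2_zero₅ (u v x y : BT k) : BT.S2 u v x y BT.zero = BT.zero := by
  unfold BT.S2
  split_ifs <;> first | rfl | simp_all [BT.isP, BT.isVV]

lemma S2_uv_or (u v x y z : BT k) (h : u = BT.zero ∨ v = BT.zero) :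
    BT.S2 u v x y z = BT.zero ∨ ∀ u' v', BT.S2 u' v' x y z = BT.S2 u v x y z := by
  unfold BT.S2
  have h0 : ¬ (BT.isVV v ∧ u = BT.barOp v ∧ x = y ∧ y = z ∧ BT.isVV x) := by
    rintro ⟨hv, huv, _⟩
    rcases h with h|h
    · exact barOp_ne_zero hv (h ▸ huv).symm
    · subst h; simp [BT.isVV] at hv
  rw [if_neg h0]
  by_cases hP : BT.isP x ∧ BT.isP y ∧ BT.isP z
  · right; intro u' v'
    have : ¬ (BT.isVV v' ∧ u' = BT.barOp v' ∧ x = y ∧ y = z ∧ BT.isVV x) := by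
      rintro ⟨_, _, _, _, hx⟩
      cases x <;> simp_all [BT.isP, BT.isVV]
    rw [if_neg this]
  · left; rw [if_neg hP]

lemma Lop_zero₁ (i : Fin (k+1)) (r s : Bool) (m : Fin (k+1)) (t : Bool) (y u : BT k) :
    BT.Lop i r s m t BT.zero y u = BT.zero := by
  cases u <;> simp [BT.Lop]

lemma Lop_zero₂ (i : Fin (k+1)) (r s : Bool) (m : Fin (k+1)) (t : Bool) (x u : BT k) :
    BT.Lop i r s m t x BT.zero u = BT.zero := by
  cases u <;> simp [BT.Lop]

lemma Lop_zero₃ (i : Fin (k+1)) (r s : Bool) (m : Fin (k+1)) (t : Bool) (x y : BT k) :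
    BT.Lop i r s m t x y BT.zero = BT.zero := rfl

lemma Rop_zero₁ (i : Fin (k+1)) (r s : Bool) (m : Fin (k+1)) (t : Bool) (y u : BT k) :
    BT.Rop i r s m t BT.zero y u = BT.zero := by
  cases u <;> simp [BT.Rop]

lemma Rop_zero₂ (i : Fin (k+1)) (r s : Bool) (m : Fin (k+1)) (t : Bool) (x u : BT k) :
    BT.Rop i r s m t x BT.zero u = BT.zero := by
  cases u <;> simp [BT.Rop]

lemma Rop_zero₃ (i : Fin (k+1)) (r s : Bool) (m : Fin (k+1)) (t : Bool) (x y : BT k) :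
    BT.Rop i r s m t x y BT.zero = BT.zero := rfl

lemma fwd_zero₁ (T : TM k) (i : Fin (k+1)) (r t : Bool) (y u : BT k) :
    fwd T i r t BT.zero y u = BT.zero := by
  unfold fwd
  rcases hT : T.instr i r with ⟨s, d, m⟩
  cases d
  · exact Lop_zero₁ i r s m t y u
  · exact Rop_zero₁ i r s m t y u

lemma fwd_zero₂ (T : TM k) (i : Fin (k+1)) (r t : Bool) (x u : BT k) :
    fwd T i r t x BT.zero u = BT.zero := by
  unfold fwd
  rcases hT : T.instr i r with ⟨s, d, m⟩
  cases d
  · exact Lop_zero₂ i r s m t x u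
  · exact Rop_zero₂ i r s m t x u

lemma fwd_zero₃ (T : TM k) (i : Fin (k+1)) (r t : Bool) (x y : BT k) :
    fwd T i r t x y BT.zero = BT.zero := by
  unfold fwd
  rcases hT : T.instr i r with ⟨s, d, m⟩
  cases d
  · exact Lop_zero₃ i r s m t x y
  · exact Rop_zero₃ i r s m t x y

lemma revOp_eq_zero {F : BT k → BT k → BT k → BT k} {x y u : BT k}
    (h : ¬ (u ≠ BT.zero ∧ ∃ v, F x y v = u)) : revOp F x y u = BT.zero := by
  unfold revOp
  exact dif_neg h

lemma mop_zero₁ (T : TM k) (i : Fin (k+1)) (r t b : Bool) (y u : BT k) :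
    mop T i r t b BT.zero y u = BT.zero := by
  cases b
  · exact fwd_zero₁ T i r t y u
  · refine revOp_eq_zero ?_
    rintro ⟨hu, v, hv⟩
    exact hu ((fwd_zero₁ T i r t y v ▸ hv).symm)

lemma mop_zero₂ (T : TM k) (i : Fin (k+1)) (r t b : Bool) (x u : BT k) :
    mop T i r t b x BT.zero u = BT.zero := by
  cases b
  · exact fwd_zero₂ T i r t x u
  · refine revOp_eq_zero ?_
    rintro ⟨hu, v, hv⟩
    exact hu ((fwd_zero₂ T i r t x v ▸ hv).symm)

lemma mop_zero₃ (T : TM k) (i : Fin (k+1)) (r t b : Bool) (x y : BT k) :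
    mop T i r t b x y BT.zero = BT.zero := by
  cases b
  · exact fwd_zero₃ T i r t x y
  · exact revOp_eq_zero (by rintro ⟨hu, _⟩; exact hu rfl)

lemma prec_zero_left (y : BT k) : prec BT.zero y = false := by cases y <;> rfl
lemma prec_zero_right (x : BT k) : prec x BT.zero = false := by cases x <;> rfl

lemma U1op_zero₁ (F : BT k → BT k → BT k → BT k) (y z u : BT k) :
    U1op F BT.zero y z u = BT.zero := by
  simp [U1op, prec_zero_left]

lemma U1op_zero₂ (F : BT k → BT k → BT k → BT k) (x z u : BT k) :
    U1op F x BT.zero z u = BT.zero := by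
  simp [U1op, prec_zero_right]

lemma U1op_zero₃ (F : BT k → BT k → BT k → BT k) (x y u : BT k) :
    U1op F x y BT.zero u = BT.zero := by
  unfold U1op
  split_ifs with h1 h2 <;> try rfl
  · rw [prec_zero_right] at h1; exact absurd h1.2.1 (by simp)
  · rw [h2.2, prec_zero_right] at h2; exact absurd h2.1 (by simp)

lemma U1op_zero₄ (F : BT k → BT k → BT k → BT k) (x y z : BT k)
    (h : F x y BT.zero = BT.zero) : U1op F x y z BT.zero = BT.zero := by
  unfold U1op
  rw [h]
  split_ifs with h1 h2 <;> first | rfl | (exact absurd h1.2.2.2 (by simp [BT.isVV]))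

lemma U2op_zero₁ (F : BT k → BT k → BT k → BT k) (y z u : BT k) :
    U2op F BT.zero y z u = BT.zero := by
  unfold U2op
  split_ifs with h1 h2 <;> try rfl
  · rw [prec_zero_left] at h1; exact absurd h1.1 (by simp)
  · rw [← h2.1, prec_zero_left] at h2; exact absurd h2.2 (by simp)

lemma U2op_zero₂ (F : BT k → BT k → BT k → BT k) (x z u : BT k) :
    U2op F x BT.zero z u = BT.zero := by
  unfold U2op
  split_ifs with h1 h2 <;> try rfl
  · rw [prec_zero_left] at h1; exact absurd h1.2.1 (by simp)
  · rw [prec_zero_left] at h2; exact absurd h2.2 (by simp)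

lemma U2op_zero₃ (F : BT k → BT k → BT k → BT k) (x y u : BT k) :
    U2op F x y BT.zero u = BT.zero := by
  unfold U2op
  split_ifs with h1 h2 <;> try rfl
  · rw [prec_zero_right] at h1; exact absurd h1.1 (by simp)
  · rw [prec_zero_right] at h2; exact absurd h2.2 (by simp)

lemma U2op_zero₄ (F : BT k → BT k → BT k → BT k) (x y z : BT k)
    (h : F y z BT.zero = BT.zero) : U2op F x y z BT.zero = BT.zero := by
  unfold U2op
  rw [h]
  split_ifs with h1 h2 <;> first | rfl | (exact absurd h1.2.2.2 (by simp [BT.isVV]))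

lemma key {k : ℕ} {T : TM k} : ∀ {n : ℕ} {p : (Fin n → BT k) → BT k}, PolyB T p →
    ∀ a b : Fin n → BT k, (∀ i, a i = b i ∨ a i = BT.zero) →
    p a = p b ∨ p a = BT.zero := by
  intro n p hp
  induction hp with
  | proj i => intro a b hab; exact hab i
  | const c => intro a b _; left; rfl
  | t0 hp ihp =>
    intro a b hab
    beta_reduce
    rcases ihp a b hab with h | h
    · left; rw [h]
    · right; rw [h]; rfl
  | t1 hp hq ihp ihq =>
    intro a b hab
    beta_reduce
    rcases ihp a b hab with h1 | h1
    · rcases ihq a b hab with h2 | h2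
      · left; rw [h1, h2]
      · right; rw [h2, T1_zero_right]
    · right; rw [h1, T1_zero_left]
  | meet hp hq ihp ihq =>
    intro a b hab
    beta_reduce
    rcases ihp a b hab with h1 | h1
    · rcases ihq a b hab with h2 | h2
      · left; rw [h1, h2]
      · right; rw [h2, meet_zero_right]
    · right; rw [h1, meet_zero_left]
  | meetI j hp hq ihp ihq =>
    intro a b hab
    beta_reduce
    rcases ihp a b hab with h1 | h1
    · rcases ihq a b hab with h2 | h2
      · left; rw [h1, h2]
      · right; rw [h2, meetI_zero_right]
    · right; rw [h1, meetI_zero_left]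
  | @jop n2 p2 q2 r2 hp hq hr ihp ihq ihr =>
    intro a b hab
    beta_reduce
    rcases ihp a b hab with h1 | h1
    swap
    · right; rw [h1, J'_zero₁]
    rcases ihq a b hab with h2 | h2
    swap
    · right; rw [h2, J'_zero₂]
    rcases ihr a b hab with h3 | h3
    · left; rw [h1, h2, h3]
    · rw [h3]
      rcases J'_zero₃_or (p2 a) (q2 a) with h | h
      · right; exact h
      · left; rw [← h1, ← h2]; exact (h _).symm
  | @s1 n2 p2 q2 r2 s2 hp hq hr hs ihp ihq ihr ihs =>
    intro a b hab
    beta_reduce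
    rcases ihq a b hab with h2 | h2
    swap
    · right; rw [h2, S1_zero₂]
    rcases ihr a b hab with h3 | h3
    swap
    · right; rw [h3, S1_zero₃]
    rcases ihs a b hab with h4 | h4
    swap
    · right; rw [h4, S1_zero₄]
    rcases ihp a b hab with h1 | h1
    · left; rw [h1, h2, h3, h4]
    · rw [h1]
      rcases S1_u_or (q2 a) (r2 a) (s2 a) with h | h
      · right; exact h
      · left; rw [← h2, ← h3, ← h4]; exact (h _).symm
  | @s2 n2 p2 q2 r2 s2' w2 hp hq hr hs hw ihp ihq ihr ihs ihw =>
    intro a b hab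
    beta_reduce
    rcases ihr a b hab with h3 | h3
    swap
    · right; rw [h3, S2_zero₃]
    rcases ihs a b hab with h4 | h4
    swap
    · right; rw [h4, S2_zero₄]
    rcases ihw a b hab with h5 | h5
    swap
    · right; rw [h5, S2_zero₅]
    rcases ihp a b hab with h1 | h1
    · rcases ihq a b hab with h2 | h2
      · left; rw [h1, h2, h3, h4, h5]
      · rw [h2]
        rcases S2_uv_or (p2 a) BT.zero (r2 a) (s2' a) (w2 a) (Or.inr rfl) with h | h
        · right; exact h
        · left; rw [← h1, ← h3, ← h4, ← h5]; exact (h _ _).symm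
    · rw [h1]
      rcases ihq a b hab with h2 | h2
      · rcases S2_uv_or BT.zero (q2 a) (r2 a) (s2' a) (w2 a) (Or.inl rfl) with h | h
        · right; exact h
        · left; rw [← h2, ← h3, ← h4, ← h5]; exact (h _ _).symm
      · rw [h2]
        rcases S2_uv_or BT.zero BT.zero (r2 a) (s2' a) (w2 a) (Or.inl rfl) with h | h
        · right; exact h
        · left; rw [← h3, ← h4, ← h5]; exact (h _ _).symm
  | mach i hi r t b hp hq hu ihp ihq ihu =>
    intro a bb hab
    beta_reduce
    rcases ihp a bb hab with h1 | h1
    swap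
    · right; rw [h1, mop_zero₁]
    rcases ihq a bb hab with h2 | h2
    swap
    · right; rw [h2, mop_zero₂]
    rcases ihu a bb hab with h3 | h3
    · left; rw [h1, h2, h3]
    · right; rw [h3, mop_zero₃]
  | u1 i hi r t b hp hq hr' hs ihp ihq ihr' ihs =>
    intro a bb hab
    beta_reduce
    rcases ihp a bb hab with h1 | h1
    swap
    · right; rw [h1, U1op_zero₁]
    rcases ihq a bb hab with h2 | h2
    swap
    · right; rw [h2, U1op_zero₂]
    rcases ihr' a bb hab with h3 | h3
    swap
    · right; rw [h3, U1op_zero₃]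
    rcases ihs a bb hab with h4 | h4
    · left; rw [h1, h2, h3, h4]
    · right; rw [h4]; exact U1op_zero₄ _ _ _ _ (mop_zero₃ T i r t b _ _)
  | u2 i hi r t b hp hq hr' hs ihp ihq ihr' ihs =>
    intro a bb hab
    beta_reduce
    rcases ihp a bb hab with h1 | h1
    swap
    · right; rw [h1, U2op_zero₁]
    rcases ihq a bb hab with h2 | h2
    swap
    · right; rw [h2, U2op_zero₂]
    rcases ihr' a bb hab with h3 | h3
    swap
    · right; rw [h3, U2op_zero₃]
    rcases ihs a bb hab with h4 | h4
    · left; rw [h1, h2, h3, h4]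
    · right; rw [h4]; exact U2op_zero₄ _ _ _ _ (mop_zero₃ T i r t b _ _)

end Aux

/-- For every u ∈ U ∪ V ∪ V̄ and every unary polynomial F of B(T):
if F is nonconstant on {0,u}, then F(0) = 0. -/
theorem statement6 {k : ℕ} (hk : 0 < k) (T : TM k) (u : BT k) (hu : BT.isUVV u)
    (F : BT k → BT k) (hF : UPolyB T F) (hne : F BT.zero ≠ F u) :
    F BT.zero = BT.zero := by
  rcases key hF (fun _ => BT.zero) (fun _ => u) (fun _ => Or.inr rfl) with h | h
  · exact absurd h hne
  · exact h

end Paper
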